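/- Equivariant matrix identity G' = A·H' + C^ζ_{≥n-k+2}: for integers n ≥ k ≥ 1 and every 1 ≤ i ≤ k, (-1)^{n-k+i} G'_{n-k+i}(z,ζ) = Σ_{j=1}^{k} A_{ij} · (-1)^{n-k+j} h'_{n-k+j}(z,ζ) + C_i, where C_i = c^ζ_{≥ n-k+1+i} for 1 ≤ i ≤ k−1 and C_k = 0, in ℤ[z_1,…,z_k, ζ_1,…,ζ_n]. -/

import Mathlib

open Finset MvPolynomial

noncomputable section

/-- The elementary symmetric polynomial `e_r` of a family of ring elements. -/
def esymmF {R : Type*} [CommRing R] {m : ℕ} (f : Fin m → R) (r : ℕ) : R :=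
  ∑ t ∈ Finset.powersetCard r Finset.univ, ∏ j ∈ t, f j

/-- The complete homogeneous symmetric polynomial `h_r` of a family. -/
def hsymmF {R : Type*} [CommRing R] {m : ℕ} (f : Fin m → R) (r : ℕ) : R :=
  ∑ μ : Sym (Fin m) r, (μ.1.map f).prod

/-- `e_r(z)`: elementary symmetric polynomial in the variables `z_1,…,z_k`
inside `ℤ[z_1,…,z_k, ζ_1,…,ζ_n]`. -/
def eZ (k n : ℕ) (r : ℕ) : MvPolynomial (Fin k ⊕ Fin n) ℤ :=
  esymmF (fun i : Fin k => X (Sum.inl i)) r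

/-- `e_r(ζ)`: elementary symmetric polynomial in the variables `ζ_1,…,ζ_n`. -/
def eZeta (k n : ℕ) (r : ℕ) : MvPolynomial (Fin k ⊕ Fin n) ℤ :=
  esymmF (fun j : Fin n => X (Sum.inr j)) r

/-- `h_r(z)`: complete homogeneous symmetric polynomial in `z_1,…,z_k`. -/
def hZ (k n : ℕ) (r : ℕ) : MvPolynomial (Fin k ⊕ Fin n) ℤ :=
  hsymmF (fun i : Fin k => X (Sum.inl i)) r

/-- The single-row Grothendieck polynomial
`G_j(z) = Σ_{a,b ≥ 0, a+b ≤ k} (-1)^b h_{j+a}(z) e_b(z)`. -/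
def GZ (k n : ℕ) (j : ℕ) : MvPolynomial (Fin k ⊕ Fin n) ℤ :=
  ∑ a ∈ Finset.range (k + 1), ∑ b ∈ Finset.range (k + 1 - a),
    (-1) ^ b * hZ k n (j + a) * eZ k n b

/-- The equivariant complete homogeneous polynomial
`h'_j(z,ζ) = Σ_{a+b=j} (-1)^a e_a(ζ) h_b(z)`. -/
def hPrime (k n : ℕ) (j : ℕ) : MvPolynomial (Fin k ⊕ Fin n) ℤ :=
  ∑ p ∈ Finset.HasAntidiagonal.antidiagonal j, (-1) ^ p.1 * eZeta k n p.1 * hZ k n p.2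

/-- The equivariant Grothendieck polynomial
`G'_j(z,ζ) = Σ_{a+b=j} (-1)^a e_a(ζ) G_b(z)`. -/
def GPrime (k n : ℕ) (j : ℕ) : MvPolynomial (Fin k ⊕ Fin n) ℤ :=
  ∑ p ∈ Finset.HasAntidiagonal.antidiagonal j, (-1) ^ p.1 * eZeta k n p.1 * GZ k n p.2

/-- The truncation `c^z_{≥j} = Σ_{i=j}^{k} (-1)^{i-j} e_i(z)`. -/
def cGeZ (k n : ℕ) (j : ℕ) : MvPolynomial (Fin k ⊕ Fin n) ℤ :=
  ∑ i ∈ Finset.Icc j k, (-1) ^ (i - j) * eZ k n i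

/-- `c'_{≥ℓ}(z,ζ) = e_ℓ(ζ) + Σ_{m=1}^{k-1} e_{ℓ-m}(ζ) c^z_{≥ m+1}`,
with the convention `e_s(ζ) = 0` for `s < 0` (i.e. for `m > ℓ`). -/
def cPrimeGe (k n : ℕ) (ℓ : ℕ) : MvPolynomial (Fin k ⊕ Fin n) ℤ :=
  eZeta k n ℓ + ∑ m ∈ Finset.Icc 1 (k - 1),
    (if m ≤ ℓ then eZeta k n (ℓ - m) * cGeZ k n (m + 1) else 0)

/-- The truncation `c^z_{≤m} = Σ_{i=0}^{m} (-1)^i e_i(z)`. -/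
def cLeZ (k n : ℕ) (m : ℕ) : MvPolynomial (Fin k ⊕ Fin n) ℤ :=
  ∑ i ∈ Finset.range (m + 1), (-1) ^ i * eZ k n i

/-- The truncation `c^ζ_{≥j} = Σ_{i=j}^{n} (-1)^{i-j} e_i(ζ)`. -/
def cGeZeta (k n : ℕ) (j : ℕ) : MvPolynomial (Fin k ⊕ Fin n) ℤ :=
  ∑ i ∈ Finset.Icc j n, (-1) ^ (i - j) * eZeta k n i

/-- The `k × k` matrix `A` (with `1`-based indices `i, j`):
`A_{ij} = (-1)^{k-i} c^z_{≥ k-j+1}` for `j < i` and `A_{ij} = (-1)^{j-i} c^z_{≤ k-j}` for `j ≥ i`. -/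
def AMat (k n : ℕ) (i j : ℕ) : MvPolynomial (Fin k ⊕ Fin n) ℤ :=
  if j < i then (-1) ^ (k - i) * cGeZ k n (k - j + 1) else (-1) ^ (j - i) * cLeZ k n (k - j)

/-- The column vector `C^ζ_{≥n-k+2}`: `C_i = c^ζ_{≥ n-k+1+i}` for `1 ≤ i ≤ k-1` and `C_k = 0`. -/
def CVec (k n : ℕ) (i : ℕ) : MvPolynomial (Fin k ⊕ Fin n) ℤ :=
  if i < k then cGeZeta k n (n - k + 1 + i) else 0

/-! Extend `h_q(z)` by zero to `q < 0` and read the formula for `G` as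
`G_q = Σ_{a=0}^{k} c^z_{≤k-a} h_{q+a}` for every `q ∈ ℤ`. The orthogonality relation
`Σ_b (-1)^b e_b(z) h_{d-b}(z) = 0` for `d ≥ 1` lowers every truncation in this formula by one,
`G_{q+1} = Σ_{j=1}^{k} c^z_{≤k-j} h_{q+j}` for `q ≥ -k`; comparing with the same formula at `q`
gives the recursion `G_{q+1} = G_q - c^z_{≤k} h_q` for `q ≥ -k`, hence `G_q = 1` for `-k ≤ q ≤ 0`, and, by induction on the row `i`, the
non-equivariant identity `(-1)^i G_{s+i} = Σ_j A_{ij} (-1)^j h_{s+j}` for all `s ≥ -k`.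
The equivariant identity is its convolution with `(-1)^a e_a(ζ)`, `0 ≤ a ≤ n`: the terms with
`a > n-k+i` missing from `G'_{n-k+i}` carry the values `G_{n-k+i-a} = 1` and account for `C_i`. -/

section SymmetricFunctions

variable {R : Type*} [CommRing R] {m : ℕ}

theorem Multiset.esymm_cons_succ (a : R) (s : Multiset R) (r : ℕ) :
    (a ::ₘ s).esymm (r + 1) = s.esymm (r + 1) + a * s.esymm r := by
  simp [Multiset.esymm, Multiset.powersetCard_cons, Multiset.sum_map_mul_left]

theorem esymmF_eq_multiset_esymm (f : Fin m → R) (r : ℕ) :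
    esymmF f r = (Multiset.map f Finset.univ.val).esymm r :=
  (Finset.esymm_map_val f _ r).symm

@[simp]
theorem esymmF_zero (f : Fin m → R) : esymmF f 0 = 1 := by
  simp [esymmF]

theorem esymmF_of_lt (f : Fin m → R) {r : ℕ} (h : m < r) : esymmF f r = 0 := by
  rw [esymmF, Finset.powersetCard_eq_empty.2 (by simpa using h), Finset.sum_empty]

theorem esymmF_cons_succ (x : R) (f : Fin m → R) (r : ℕ) :
    esymmF (Fin.cons x f : Fin (m + 1) → R) (r + 1) = esymmF f (r + 1) + x * esymmF f r := by
  simp only [esymmF_eq_multiset_esymm, Fin.univ_val_map, List.ofFn_succ, Fin.cons_zero,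
    Fin.cons_succ, ← Multiset.cons_coe, Multiset.esymm_cons_succ]

@[simp]
theorem hsymmF_zero (f : Fin m → R) : hsymmF f 0 = 1 := by
  simp [hsymmF, Sym.eq_nil_of_card_zero]

theorem hsymmF_fin_zero_succ (f : Fin 0 → R) (r : ℕ) : hsymmF f (r + 1) = 0 := by
  simp [hsymmF]

theorem hsymmF_cons_succ (x : R) (f : Fin m → R) (r : ℕ) :
    hsymmF (Fin.cons x f : Fin (m + 1) → R) (r + 1)
      = hsymmF f (r + 1) + x * hsymmF (Fin.cons x f : Fin (m + 1) → R) r := by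
  let e := finSuccEquiv m
  -- a multiset containing `0` is `0` added to a smaller one; one avoiding `0` lives on `Fin m`
  let E : Sym (Fin (m + 1)) (r + 1) ≃ Sym (Fin (m + 1)) r ⊕ Sym (Fin m) (r + 1) :=
    (Sym.equivCongr e).trans
      (Equiv.trans symOptionSuccEquiv ((Sym.equivCongr e.symm).sumCongr (Equiv.refl _)))
  have hl : ∀ s, (E.symm (Sum.inl s) : Multiset (Fin (m + 1))) = 0 ::ₘ s := fun s ↦ by
    simp [E, e, Sym.equivCongr, symOptionSuccEquiv, Sym.coe_cons]
  have hr : ∀ s, (E.symm (Sum.inr s) : Multiset (Fin (m + 1))) = s.1.map Fin.succ := fun s ↦ by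
    simp [E, e, Sym.equivCongr, symOptionSuccEquiv]
  rw [hsymmF, ← E.symm.sum_comp, Fintype.sum_sum_type]
  simp only [Sym.val_eq_coe, hl, hr, Multiset.map_cons, Fin.cons_zero, Multiset.prod_cons,
    Multiset.map_map, Function.comp_apply, Fin.cons_succ, hsymmF, Finset.mul_sum, add_comm]

theorem sum_antidiagonal_esymmF_mul_hsymmF_eq_zero (f : Fin m → R) {d : ℕ} (hd : d ≠ 0) :
    ∑ p ∈ antidiagonal d, (-1) ^ p.1 * esymmF f p.1 * hsymmF f p.2 = 0 := by
  obtain ⟨d, rfl⟩ := Nat.exists_eq_succ_of_ne_zero hd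
  induction m with
  | zero =>
    refine Finset.sum_eq_zero fun p hp ↦ ?_
    rw [HasAntidiagonal.mem_antidiagonal] at hp
    obtain ⟨b, c⟩ := p
    rcases b with _ | b
    · obtain rfl : c = d + 1 := by simpa using hp
      simp [hsymmF_fin_zero_succ]
    · simp [esymmF_of_lt f (Nat.succ_pos b)]
  | succ m ih =>
    obtain ⟨x, g, rfl⟩ : ∃ x g, f = Fin.cons x g := ⟨_, _, (Fin.cons_self_tail f).symm⟩
    let T : ℕ → R := fun d ↦ ∑ p ∈ antidiagonal d,
      (-1) ^ p.1 * esymmF g p.1 * hsymmF (Fin.cons x g : Fin (m + 1) → R) p.2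
    have hS : ∑ p ∈ antidiagonal (d + 1),
        (-1) ^ p.1 * esymmF (Fin.cons x g : Fin (m + 1) → R) p.1
          * hsymmF (Fin.cons x g : Fin (m + 1) → R) p.2 = T (d + 1) - x * T d := by
      simp only [T, Nat.sum_antidiagonal_succ, esymmF_cons_succ, Finset.mul_sum, esymmF_zero]
      rw [sub_eq_add_neg, ← Finset.sum_neg_distrib, add_assoc, ← Finset.sum_add_distrib]
      congr 1
      refine Finset.sum_congr rfl fun p _ ↦ ?_
      ring
    have hT : T (d + 1) = (∑ p ∈ antidiagonal (d + 1), (-1) ^ p.1 * esymmF g p.1 * hsymmF g p.2)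
        + x * T d := by
      simp only [T, Nat.sum_antidiagonal_succ', hsymmF_cons_succ, Finset.mul_sum, hsymmF_zero]
      rw [add_assoc, ← Finset.sum_add_distrib]
      congr 1
      refine Finset.sum_congr rfl fun p _ ↦ ?_
      ring
    rw [hS, hT, ih]
    ring

end SymmetricFunctions

theorem neg_one_pow_mul_sum_Icc {R : Type*} [Ring R] (x : ℕ → R) (j m : ℕ) :
    (-1) ^ j * ∑ i ∈ Icc j m, (-1) ^ (i - j) * x i = ∑ i ∈ Icc j m, (-1) ^ i * x i := by
  rw [Finset.mul_sum]
  refine Finset.sum_congr rfl fun i hi ↦ ?_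
  rw [← mul_assoc, ← pow_add, Nat.add_sub_cancel' (Finset.mem_Icc.1 hi).1]

theorem neg_one_pow_mul_neg_one_pow_succ {R : Type*} [Ring R] (t : ℕ) :
    (-1 : R) ^ t * (-1) ^ (t + 1) = -1 := by
  rw [← pow_add, Odd.neg_one_pow ⟨t, by ring⟩]

section Grothendieck

variable (k n : ℕ)

def hZInt : ℤ → MvPolynomial (Fin k ⊕ Fin n) ℤ
  | .ofNat d => hZ k n d
  | .negSucc _ => 0

def GZInt (q : ℤ) : MvPolynomial (Fin k ⊕ Fin n) ℤ :=
  ∑ a ∈ range (k + 1), cLeZ k n (k - a) * hZInt k n (q + a)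

variable {k n}

@[simp]
theorem hZInt_natCast (d : ℕ) : hZInt k n d = hZ k n d := rfl

theorem hZInt_of_neg {q : ℤ} (hq : q < 0) : hZInt k n q = 0 := by
  cases q with
  | ofNat d => exact absurd hq (by simp)
  | negSucc d => rfl

@[simp]
theorem hZInt_zero : hZInt k n 0 = 1 := hsymmF_zero _

theorem hZInt_natCast_sub {d a : ℕ} (h : a ≤ d) : hZInt k n (d - a) = hZ k n (d - a) := by
  rw [← Nat.cast_sub h, hZInt_natCast]

@[simp]
theorem eZ_zero : eZ k n 0 = 1 := esymmF_zero _

@[simp]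
theorem cLeZ_zero : cLeZ k n 0 = 1 := by simp [cLeZ]

theorem cLeZ_succ (m : ℕ) :
    cLeZ k n (m + 1) = cLeZ k n m + (-1) ^ (m + 1) * eZ k n (m + 1) :=
  Finset.sum_range_succ _ _

theorem cLeZ_add_cGeZ {m : ℕ} (hm : m ≤ k) :
    cLeZ k n m + (-1) ^ (m + 1) * cGeZ k n (m + 1) = cLeZ k n k := by
  rw [cGeZ, neg_one_pow_mul_sum_Icc, cLeZ, cLeZ, ← Finset.Ico_add_one_right_eq_Icc]
  exact Finset.sum_range_add_sum_Ico _ (by omega)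

theorem sum_eZ_mul_hZInt_eq_zero {q : ℤ} (hq : 0 < q) :
    ∑ b ∈ range (k + 1), (-1) ^ b * eZ k n b * hZInt k n (q - b) = 0 := by
  lift q to ℕ using hq.le
  have hvanish : ∀ b ≥ min k q + 1, (-1) ^ b * eZ k n b * hZInt k n (q - b) = 0 := by
    intro b hb
    rcases le_or_gt b k with hbk | hbk
    · rw [hZInt_of_neg (by omega), mul_zero]
    · rw [eZ, esymmF_of_lt _ hbk, mul_zero, zero_mul]
  rw [Finset.eventually_constant_sum hvanish (by omega),
    ← Finset.eventually_constant_sum hvanish (n := q + 1) (by omega)]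
  convert sum_antidiagonal_esymmF_mul_hsymmF_eq_zero (fun i : Fin k ↦ X (Sum.inl i) :
    Fin k → MvPolynomial (Fin k ⊕ Fin n) ℤ) (by omega : q ≠ 0) using 1
  rw [Nat.sum_antidiagonal_eq_sum_range_succ_mk]
  refine Finset.sum_congr rfl fun b hb ↦ ?_
  rw [hZInt_natCast_sub (by simpa [Nat.lt_succ_iff] using hb), eZ, hZ]

theorem GZInt_natCast (j : ℕ) : GZInt k n j = GZ k n j := by
  refine Finset.sum_congr rfl fun a ha ↦ ?_
  rw [show k + 1 - a = k - a + 1 by grind, cLeZ, Finset.sum_mul, ← Nat.cast_add, hZInt_natCast]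
  refine Finset.sum_congr rfl fun b _ ↦ ?_
  ring

theorem GZInt_eq_cLeZ_mul_add_sum (q : ℤ) :
    GZInt k n q
      = cLeZ k n k * hZInt k n q + ∑ j ∈ Icc 1 k, cLeZ k n (k - j) * hZInt k n (q + j) := by
  rw [GZInt, Finset.sum_range_eq_add_Ico _ (by omega), Finset.Ico_add_one_right_eq_Icc]
  simp

theorem GZInt_add_one_eq_sum {q : ℤ} (hq : -k ≤ q) :
    GZInt k n (q + 1) = ∑ j ∈ Icc 1 k, cLeZ k n (k - j) * hZInt k n (q + j) := by
  have horth := sum_eZ_mul_hZInt_eq_zero (k := k) (n := n) (q := q + 1 + k) (by omega)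
  rw [← Finset.sum_range_reflect, Finset.sum_range_succ] at horth
  rw [← Finset.Ico_add_one_right_eq_Icc, Finset.sum_Ico_eq_sum_range, GZInt,
    Finset.sum_range_succ]
  simp only [Nat.add_sub_cancel, Nat.sub_self] at horth ⊢
  have hterm : ∀ a ∈ range k, cLeZ k n (k - a) * hZInt k n (q + 1 + a)
      = cLeZ k n (k - (1 + a)) * hZInt k n (q + ↑(1 + a))
        + (-1) ^ (k - a) * eZ k n (k - a) * hZInt k n (q + 1 + k - ↑(k - a)) := by
    intro a ha
    have hka : k - a = k - (1 + a) + 1 := by grind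
    rw [show q + 1 + k - ↑(k - a) = q + ↑(1 + a) by grind,
      show q + 1 + a = q + ↑(1 + a) by grind, hka, cLeZ_succ]
    ring
  rw [Finset.sum_congr rfl hterm, Finset.sum_add_distrib]
  simp only [cLeZ_zero, eZ_zero, Nat.cast_zero, sub_zero] at horth ⊢
  linear_combination horth

theorem GZInt_add_one_eq_sub {q : ℤ} (hq : -k ≤ q) :
    GZInt k n (q + 1) = GZInt k n q - cLeZ k n k * hZInt k n q := by
  rw [GZInt_add_one_eq_sum hq, GZInt_eq_cLeZ_mul_add_sum]
  ring

theorem GZInt_eq_one {q : ℤ} (hkq : -k ≤ q) (hq : q ≤ 0) : GZInt k n q = 1 := by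
  induction q, hkq using Int.leInduction with
  | base =>
    rw [GZInt, Finset.sum_eq_single_of_mem k (Finset.self_mem_range_succ k) fun a ha hak ↦ by
      rw [hZInt_of_neg (by grind), mul_zero]]
    simp [cLeZ, eZ]
  | succ q hkq ih =>
    rw [GZInt_add_one_eq_sub hkq, ih (by omega), hZInt_of_neg (by omega)]
    ring

theorem AMat_succ_add_AMat {i : ℕ} (hik : i < k) (j : ℕ) :
    AMat k n (i + 1) j + AMat k n i j = if j = i then cLeZ k n k else 0 := by
  unfold AMat
  rcases lt_trichotomy j i with hji | rfl | hij
  · rw [if_pos (by omega), if_pos hji, if_neg (by omega), show k - i = k - (i + 1) + 1 by omega]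
    ring
  · rw [if_pos (by omega), if_neg (lt_irrefl j), if_pos rfl, Nat.sub_self, pow_zero, one_mul,
      ← cLeZ_add_cGeZ (by omega : k - j ≤ k), show k - j = k - (j + 1) + 1 by omega]
    ring
  · rw [if_neg (by omega), if_neg (by omega), if_neg (by omega),
      show j - i = j - (i + 1) + 1 by omega]
    ring

theorem neg_one_pow_mul_GZInt {i : ℕ} (hi : 1 ≤ i) (hik : i ≤ k) {s : ℤ} (hs : -k ≤ s) :
    (-1) ^ i * GZInt k n (s + i)
      = ∑ j ∈ Icc 1 k, AMat k n i j * ((-1) ^ j * hZInt k n (s + j)) := by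
  induction i, hi using Nat.le_induction with
  | base =>
    rw [Nat.cast_one, GZInt_add_one_eq_sum hs, pow_one, neg_one_mul, ← Finset.sum_neg_distrib]
    refine Finset.sum_congr rfl fun j hj ↦ ?_
    obtain ⟨t, rfl⟩ : ∃ t, j = t + 1 := ⟨j - 1, by grind⟩
    rw [AMat, if_neg (by omega), Nat.add_sub_cancel, ← mul_assoc,
      mul_right_comm _ (cLeZ k n _), neg_one_pow_mul_neg_one_pow_succ, neg_one_mul, neg_mul]
  | succ i hi ih =>
    have hstep := GZInt_add_one_eq_sub (k := k) (n := n) (q := s + i) (by omega)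
    have hA : ∀ j, AMat k n (i + 1) j = (if j = i then cLeZ k n k else 0) - AMat k n i j :=
      fun j ↦ eq_sub_of_add_eq (AMat_succ_add_AMat (by omega) j)
    simp only [hA, sub_mul, Finset.sum_sub_distrib, ite_mul, zero_mul, Finset.sum_ite_eq',
      Finset.mem_Icc, if_pos (And.intro hi (by omega : i ≤ k))]
    rw [← ih (by omega), Nat.cast_succ, ← add_assoc, hstep]
    ring

end Grothendieck

section Equivariant

variable {k n : ℕ}

theorem hPrime_eq_sum_range {j : ℕ} (hj : j ≤ n) :
    hPrime k n j = ∑ a ∈ range (n + 1), (-1) ^ a * eZeta k n a * hZInt k n (j - a) := by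
  rw [Finset.eventually_constant_sum (N := j + 1)
    (fun a ha ↦ by rw [hZInt_of_neg (by omega), mul_zero]) (by omega), hPrime,
    Nat.sum_antidiagonal_eq_sum_range_succ_mk]
  refine Finset.sum_congr rfl fun a ha ↦ ?_
  rw [hZInt_natCast_sub (by simpa [Nat.lt_succ_iff] using ha)]

theorem neg_one_pow_mul_GPrime {j : ℕ} (hkj : n ≤ j + k) (hjn : j ≤ n) :
    (-1) ^ j * GPrime k n j
      = (-1) ^ j * ∑ a ∈ range (n + 1), (-1) ^ a * eZeta k n a * GZInt k n (j - a)
        + cGeZeta k n (j + 1) := by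
  have htail : ∑ a ∈ Ico (j + 1) (n + 1), (-1) ^ a * eZeta k n a * GZInt k n (j - a)
      = (-1) ^ (j + 1) * cGeZeta k n (j + 1) := by
    rw [cGeZeta, neg_one_pow_mul_sum_Icc, ← Finset.Ico_add_one_right_eq_Icc]
    refine Finset.sum_congr rfl fun a ha ↦ ?_
    rw [Finset.mem_Ico] at ha
    rw [GZInt_eq_one (by omega) (by omega), mul_one]
  rw [← Finset.sum_range_add_sum_Ico _ (by omega : j + 1 ≤ n + 1), htail, mul_add,
    ← mul_assoc, neg_one_pow_mul_neg_one_pow_succ, neg_one_mul, neg_add_cancel_right, GPrime,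
    Nat.sum_antidiagonal_eq_sum_range_succ_mk]
  congr 1
  refine Finset.sum_congr rfl fun a ha ↦ ?_
  rw [← Nat.cast_sub (by simpa [Nat.lt_succ_iff] using ha), GZInt_natCast]

theorem CVec_eq_cGeZeta {i : ℕ} (hik : i ≤ k) : CVec k n i = cGeZeta k n (n - k + 1 + i) := by
  rw [CVec]
  split_ifs with hi
  · rfl
  · rw [cGeZeta, Finset.Icc_eq_empty (by omega), Finset.sum_empty]

end Equivariant

theorem GPrime_eq_A_mul_hPrime_add_C_general (n k : ℕ) (hkn : k ≤ n)
    (i : ℕ) (hi1 : 1 ≤ i) (hik : i ≤ k) :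
    (-1) ^ (n - k + i) * GPrime k n (n - k + i)
      = (∑ j ∈ Finset.Icc 1 k, AMat k n i j * ((-1) ^ (n - k + j) * hPrime k n (n - k + j)))
        + CVec k n i := by
  set N := n - k
  rw [neg_one_pow_mul_GPrime (by omega) (by omega), CVec_eq_cGeZeta hik, add_right_comm N 1 i,
    Finset.mul_sum]
  congr 1
  calc ∑ a ∈ range (n + 1),
          (-1) ^ (N + i) * ((-1) ^ a * eZeta k n a * GZInt k n (↑(N + i) - a))
      = ∑ a ∈ range (n + 1),
          (-1) ^ (N + a) * eZeta k n a * ((-1) ^ i * GZInt k n ((N - a : ℤ) + i)) := by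
        refine Finset.sum_congr rfl fun a _ ↦ ?_
        rw [Nat.cast_add, add_sub_right_comm]
        ring
    _ = ∑ a ∈ range (n + 1), (-1) ^ (N + a) * eZeta k n a
          * ∑ j ∈ Icc 1 k, AMat k n i j * ((-1) ^ j * hZInt k n ((N - a : ℤ) + j)) := by
        refine Finset.sum_congr rfl fun a ha ↦ ?_
        rw [neg_one_pow_mul_GZInt hi1 hik (by grind)]
    _ = ∑ j ∈ Icc 1 k, AMat k n i j * ((-1) ^ (N + j) * hPrime k n (N + j)) := by
        simp_rw [Finset.mul_sum]
        rw [Finset.sum_comm]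
        refine Finset.sum_congr rfl fun j hj ↦ ?_
        rw [hPrime_eq_sum_range (by grind), Finset.mul_sum, Finset.mul_sum]
        refine Finset.sum_congr rfl fun a _ ↦ ?_
        rw [Nat.cast_add, add_sub_right_comm]
        ring

/-- Equivariant matrix identity `G' = A·H' + C^ζ_{≥n-k+2}`:
for `n ≥ k ≥ 1` and `1 ≤ i ≤ k`,
`(-1)^{n-k+i} G'_{n-k+i}(z,ζ) = Σ_{j=1}^{k} A_{ij} · (-1)^{n-k+j} h'_{n-k+j}(z,ζ) + C_i`. -/
theorem GPrime_eq_A_mul_hPrime_add_C (n k : ℕ) (hk : 1 ≤ k) (hkn : k ≤ n)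
    (i : ℕ) (hi1 : 1 ≤ i) (hik : i ≤ k) :
    (-1) ^ (n - k + i) * GPrime k n (n - k + i)
      = (∑ j ∈ Finset.Icc 1 k, AMat k n i j * ((-1) ^ (n - k + j) * hPrime k n (n - k + j)))
        + CVec k n i :=
  GPrime_eq_A_mul_hPrime_add_C_general n k hkn i hi1 hik

end
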